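/- For a finite plane tree τ with vertices u_0,...,u_{n-1} in depth-first-search order, the looptree distance from the root to any vertex u_j satisfies d_{Loop(τ)}(root, u_j) ≤ d_τ(root, u_j) + W_j(τ), where W(τ) is the Lukasiewicz path of τ. Consequently, height(Loop(τ)) ≤ height(τ) + max_{0≤j≤n} W_j(τ). -/

import Mathlib

/-- A finite rooted plane tree: a root together with an ordered list of subtrees. -/
inductive PlaneTree where
  | node : List PlaneTree → PlaneTree

namespace PlaneTree

/-- The list of children (subtrees) of the root. -/
def children : PlaneTree → List PlaneTree
  | .node ts => ts

mutual
/-- The vertices of a plane tree, encoded as positions (finite sequences of child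
indices), listed in depth-first-search (lexicographic) order; the root is `[]`. -/
def positions : PlaneTree → List (List ℕ)
  | .node ts => [] :: positionsList 0 ts

def positionsList : ℕ → List PlaneTree → List (List ℕ)
  | _, [] => []
  | i, t :: ts => (positions t).map (fun p => i :: p) ++ positionsList (i + 1) ts
end

/-- The subtree rooted at a given position, if the position is present. -/
def subtree? : PlaneTree → List ℕ → Option PlaneTree
  | t, [] => some t
  | t, i :: p =>
    match t.children[i]? with
    | some c => subtree? c p
    | none => none

/-- The outdegree (number of children) of the vertex at position `v`. -/
def out (t : PlaneTree) (v : List ℕ) : ℕ :=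
  match t.subtree? v with
  | some c => c.children.length
  | none => 0

/-- The Lukasiewicz path of a plane tree: `W 0 = 0` and
`W (j+1) = W j + out(u_j) - 1`, `u_j` being the `j`-th vertex in DFS order. -/
def luka (t : PlaneTree) : ℕ → ℤ
  | 0 => 0
  | j + 1 =>
    t.luka j +
      (match t.positions[j]? with
       | some v => (t.out v : ℤ) - 1
       | none => 0)

/-- The height of the tree: the maximal distance from the root, i.e. the maximal
length of a position. -/
def height (t : PlaneTree) : ℕ := (t.positions.map List.length).foldr max 0

/-- Adjacency in the looptree of `t`: two vertices are joined if they are adjacent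
siblings, or if one is the parent of the other and the child is the leftmost
(index `0`) or rightmost (index `out - 1`) child of the parent. -/
def loopAdj (t : PlaneTree) (v w : List ℕ) : Prop :=
  v ∈ t.positions ∧ w ∈ t.positions ∧
    ((∃ u i, v = u ++ [i] ∧ w = u ++ [i + 1]) ∨
      w = v ++ [0] ∨
      w = v ++ [t.out v - 1])

/-- The looptree of `t`, as a simple graph on positions. -/
def loopGraph (t : PlaneTree) : SimpleGraph (List ℕ) :=
  SimpleGraph.fromRel (loopAdj t)

/-- The graph distance from the root in the looptree of `t`. -/
noncomputable def loopDist (t : PlaneTree) (v : List ℕ) : ℕ :=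
  (loopGraph t).dist [] v

/-- The height of the looptree of `t`. -/
noncomputable def loopHeight (t : PlaneTree) : ℕ :=
  (t.positions.map (loopDist t)).foldr max 0

end PlaneTree

/-!
Walk down the ancestral line of `v = u_j`: from a vertex `u` with `d` children, the looptree
reaches its `i`-th child in `d - i` steps, first to the rightmost child and then leftwards
along the siblings. This gives `d_Loop(root, v) ≤ ∑ (d - i)` over the edges of the line, which
is `|v|` plus the number of younger siblings of the ancestors of `v` (`v` included). Those
younger siblings are exactly the vertices whose parent precedes `v` in DFS order but which
do not themselves precede `v`, so their number is `W_j`.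
-/

namespace PlaneTree

theorem node_induction {P : PlaneTree → Prop}
    (h : ∀ ts, (∀ c ∈ ts, P c) → P (node ts)) : ∀ t, P t
  | node ts => h ts fun c _ => node_induction h c
termination_by t => sizeOf t
decreasing_by simp_wf; have := List.sizeOf_lt_of_mem ‹c ∈ ts›; omega

lemma positionsList_cons (i : ℕ) (c : PlaneTree) (ts : List PlaneTree) :
    positionsList i (c :: ts) = c.positions.map (i :: ·) ++ positionsList (i + 1) ts :=
  rfl

@[simp] lemma subtree?_nil (t : PlaneTree) : t.subtree? [] = some t := rfl

lemma subtree?_cons {ts : List PlaneTree} {i : ℕ} {c : PlaneTree} (h : ts[i]? = some c)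
    (p : List ℕ) : (node ts).subtree? (i :: p) = c.subtree? p := by
  simp only [subtree?, children, h]

lemma subtree?_cons_of_getElem?_eq_none {ts : List PlaneTree} {i : ℕ} (h : ts[i]? = none)
    (p : List ℕ) : (node ts).subtree? (i :: p) = none := by
  simp only [subtree?, children, h]

lemma out_eq_of_subtree? {t c : PlaneTree} {u : List ℕ} (h : t.subtree? u = some c) :
    t.out u = c.children.length := by
  rw [out, h]

lemma out_cons {ts : List PlaneTree} {i : ℕ} {c : PlaneTree} (h : ts[i]? = some c)
    (p : List ℕ) : (node ts).out (i :: p) = c.out p := by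
  rw [out, out, subtree?_cons h]

lemma subtree?_append (t : PlaneTree) (u v : List ℕ) :
    t.subtree? (u ++ v) = (t.subtree? u).bind (·.subtree? v) := by
  induction u generalizing t with
  | nil => rfl
  | cons i p ih =>
    obtain ⟨ts⟩ := t
    cases h : ts[i]? with
    | none => simp only [List.cons_append, subtree?_cons_of_getElem?_eq_none h, Option.bind_none]
    | some c => simp only [List.cons_append, subtree?_cons h, ih]

lemma subtree?_append_singleton {t c : PlaneTree} {u : List ℕ} {k : ℕ}
    (hc : t.subtree? u = some c) :
    (t.subtree? (u ++ [k])).isSome ↔ k < c.children.length := by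
  obtain ⟨cs⟩ := c
  rw [subtree?_append, hc, Option.bind_some, children]
  cases h : cs[k]? with
  | none => simpa [subtree?_cons_of_getElem?_eq_none h] using h
  | some d => simpa [subtree?_cons h] using (List.getElem?_eq_some_iff.mp h).1

lemma mem_positionsList {ts : List PlaneTree} {i : ℕ} {v : List ℕ} :
    v ∈ positionsList i ts ↔
      ∃ k c p, ts[k]? = some c ∧ p ∈ c.positions ∧ v = (i + k) :: p := by
  induction ts generalizing i with
  | nil => simp [positionsList]
  | cons c ts ih =>
    simp only [positionsList_cons, List.mem_append, List.mem_map, ih]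
    constructor
    · rintro (⟨p, hp, rfl⟩ | ⟨k, c', p, hk, hp, rfl⟩)
      · exact ⟨0, c, p, rfl, hp, rfl⟩
      · exact ⟨k + 1, c', p, hk, hp, by rw [Nat.add_right_comm, Nat.add_assoc]⟩
    · rintro ⟨_ | k, c', p, hk, hp, rfl⟩
      · obtain rfl : c = c' := by simpa using hk
        exact Or.inl ⟨p, hp, rfl⟩
      · exact Or.inr ⟨k, c', p, hk, hp, by rw [Nat.add_right_comm, Nat.add_assoc]⟩

theorem mem_positions_iff : ∀ (t : PlaneTree) (v : List ℕ),
    v ∈ t.positions ↔ (t.subtree? v).isSome := by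
  refine node_induction fun ts ih v => ?_
  rcases v with _ | ⟨k, p⟩
  · simp [positions, subtree?]
  rw [positions, List.mem_cons, or_iff_right (List.cons_ne_nil _ _), mem_positionsList]
  simp only [Nat.zero_add, List.cons.injEq]
  cases h : ts[k]? with
  | none =>
    simp only [subtree?_cons_of_getElem?_eq_none h, Option.isSome_none, Bool.false_eq_true,
      iff_false, not_exists, not_and]
    rintro k' c p' hk' - rfl rfl
    simp [h] at hk'
  | some c =>
    rw [subtree?_cons h, ← ih c (List.mem_of_getElem? h) p]
    constructor
    · rintro ⟨k', c', p', hk', hp', rfl, rfl⟩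
      rwa [Option.some.inj (h.symm.trans hk')]
    · exact fun hp => ⟨k, c, p, h, hp, rfl, rfl⟩

/-- `rightSpan t [i₁, …, iₖ]` sums `out(parent) - index` over the edges of the ancestral line:
the number of siblings weakly to the right of each ancestor. -/
def rightSpan : PlaneTree → List ℕ → ℕ
  | _, [] => 0
  | node ts, i :: p =>
    match _h : ts[i]? with
    | some c => (ts.length - i) + rightSpan c p
    | none => 0
termination_by t => sizeOf t
decreasing_by simp_wf; have := List.sizeOf_lt_of_mem (List.mem_of_getElem? _h); omega

@[simp] lemma rightSpan_nil (t : PlaneTree) : t.rightSpan [] = 0 := by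
  rw [rightSpan]

lemma rightSpan_cons {ts : List PlaneTree} {i : ℕ} {c : PlaneTree} (h : ts[i]? = some c)
    (p : List ℕ) : (node ts).rightSpan (i :: p) = (ts.length - i) + c.rightSpan p := by
  rw [rightSpan, h]

lemma rightSpan_append_singleton {t c : PlaneTree} {u : List ℕ} (hc : t.subtree? u = some c)
    {k : ℕ} (hk : k < c.children.length) :
    t.rightSpan (u ++ [k]) = t.rightSpan u + (c.children.length - k) := by
  induction u generalizing t with
  | nil =>
    obtain ⟨ts⟩ := t
    obtain rfl : node ts = c := Option.some.inj hc
    have hk : k < ts.length := hk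
    rw [List.nil_append, rightSpan_cons (List.getElem?_eq_getElem hk),
      rightSpan_nil, rightSpan_nil, children]
    omega
  | cons i p ih =>
    obtain ⟨ts⟩ := t
    cases h : ts[i]? with
    | none => simp [subtree?_cons_of_getElem?_eq_none h] at hc
    | some d =>
      rw [subtree?_cons h] at hc
      rw [List.cons_append, rightSpan_cons h, rightSpan_cons h, ih hc, Nat.add_assoc]

section Walks

variable {t : PlaneTree}

lemma loopGraph_adj_succ {u : List ℕ} {k : ℕ} (h : u ++ [k] ∈ t.positions)
    (h' : u ++ [k + 1] ∈ t.positions) : t.loopGraph.Adj (u ++ [k + 1]) (u ++ [k]) := by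
  refine (SimpleGraph.fromRel_adj _ _ _).mpr
    ⟨?_, Or.inr ⟨h, h', Or.inl ⟨u, k, rfl, rfl⟩⟩⟩
  simp

lemma loopGraph_adj_rightmost {u : List ℕ} (hu : u ∈ t.positions)
    (h : u ++ [t.out u - 1] ∈ t.positions) : t.loopGraph.Adj u (u ++ [t.out u - 1]) :=
  (SimpleGraph.fromRel_adj _ _ _).mpr ⟨by simp, Or.inl ⟨hu, h, Or.inr (Or.inr rfl)⟩⟩

lemma exists_walk_to_child {u : List ℕ} {c : PlaneTree} (hc : t.subtree? u = some c) {k : ℕ}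
    (hk : k < c.children.length) :
    ∃ w : t.loopGraph.Walk u (u ++ [k]), w.length = c.children.length - k := by
  have mem : ∀ {k}, k < c.children.length → u ++ [k] ∈ t.positions := fun hk =>
    (mem_positions_iff t _).mpr ((subtree?_append_singleton hc).mpr hk)
  obtain ⟨m, hm⟩ := Nat.exists_eq_add_of_lt hk
  induction m generalizing k with
  | zero =>
    obtain rfl : k = t.out u - 1 := by rw [out_eq_of_subtree? hc]; omega
    have hu : u ∈ t.positions := (mem_positions_iff t u).mpr (by simp [hc])
    exact ⟨(loopGraph_adj_rightmost hu (mem hk)).toWalk, by simp; omega⟩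
  | succ m ih =>
    obtain ⟨w, hw⟩ := ih (k := k + 1) (by omega) (by omega)
    exact ⟨w.concat (loopGraph_adj_succ (mem hk) (mem (by omega))), by simp [hw]; omega⟩

lemma exists_walk_length_eq_rightSpan {v : List ℕ} (hv : (t.subtree? v).isSome) :
    ∃ w : t.loopGraph.Walk [] v, w.length = t.rightSpan v := by
  induction v using List.reverseRecOn with
  | nil => exact ⟨.nil, by simp⟩
  | append_singleton u k ih =>
    cases hc : t.subtree? u with
    | none => simp [subtree?_append, hc] at hv
    | some c =>
      have hk : k < c.children.length := (subtree?_append_singleton hc).mp hv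
      obtain ⟨w, hw⟩ := ih (by simp [hc])
      obtain ⟨w', hw'⟩ := exists_walk_to_child hc hk
      refine ⟨w.append w', ?_⟩
      rw [SimpleGraph.Walk.length_append, hw, hw', rightSpan_append_singleton hc hk]

theorem loopDist_le_rightSpan {v : List ℕ} (hv : v ∈ t.positions) :
    t.loopDist v ≤ t.rightSpan v := by
  obtain ⟨w, hw⟩ := exists_walk_length_eq_rightSpan ((mem_positions_iff t v).mp hv)
  exact hw ▸ SimpleGraph.dist_le w

end Walks

def lukaSum (t : PlaneTree) (l : List (List ℕ)) : ℤ :=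
  (l.map fun v => (t.out v : ℤ) - 1).sum

@[simp] lemma lukaSum_nil (t : PlaneTree) : t.lukaSum [] = 0 := rfl

lemma lukaSum_cons (t : PlaneTree) (v : List ℕ) (l : List (List ℕ)) :
    t.lukaSum (v :: l) = ((t.out v : ℤ) - 1) + t.lukaSum l :=
  List.sum_cons

lemma lukaSum_append (t : PlaneTree) (l l' : List (List ℕ)) :
    t.lukaSum (l ++ l') = t.lukaSum l + t.lukaSum l' := by
  simp [lukaSum]

lemma lukaSum_map_cons {ts : List PlaneTree} {i : ℕ} {c : PlaneTree} (h : ts[i]? = some c)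
    (l : List (List ℕ)) : (node ts).lukaSum (l.map (i :: ·)) = c.lukaSum l := by
  simp only [lukaSum, List.map_map, Function.comp_def, out_cons h]

theorem luka_eq_lukaSum_take (t : PlaneTree) (j : ℕ) :
    t.luka j = t.lukaSum (t.positions.take j) := by
  induction j with
  | zero => rfl
  | succ j ih =>
    rw [luka, ih, List.take_add_one, lukaSum_append]
    cases t.positions[j]? <;> simp [lukaSum]

/- The forest `ts` is treated as the last children of `node (pre ++ ts)`, so that
`positionsList pre.length ts` consists of genuine positions of that tree. -/
lemma lukaSum_positionsList (pre ts : List PlaneTree)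
    (h : ∀ c ∈ ts, c.lukaSum c.positions = -1) :
    (node (pre ++ ts)).lukaSum (positionsList pre.length ts) = -ts.length := by
  induction ts generalizing pre with
  | nil => rfl
  | cons c ts ih =>
    have hc : (pre ++ c :: ts)[pre.length]? = some c := by simp
    have ih := ih (pre ++ [c]) fun c' hc' => h c' (List.mem_cons_of_mem _ hc')
    rw [List.append_assoc, List.singleton_append, List.length_append, List.length_singleton]
      at ih
    rw [positionsList_cons, lukaSum_append, lukaSum_map_cons hc, h c List.mem_cons_self, ih]
    simp only [List.length_cons, Nat.cast_add, Nat.cast_one]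
    ring

theorem lukaSum_positions : ∀ t : PlaneTree, t.lukaSum t.positions = -1 :=
  node_induction fun ts ih => by
    have h := lukaSum_positionsList [] ts ih
    rw [List.nil_append, List.length_nil] at h
    rw [positions, lukaSum_cons, h]
    simp only [out, subtree?_nil, children]
    ring

lemma lukaSum_positionsList_take (pre ts : List PlaneTree)
    (h : ∀ c ∈ ts, ∀ j v, c.positions[j]? = some v →
      c.lukaSum (c.positions.take j) = c.rightSpan v - v.length)
    {j : ℕ} {v : List ℕ} (hv : (positionsList pre.length ts)[j]? = some v) :
    (node (pre ++ ts)).lukaSum ((positionsList pre.length ts).take j) =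
      (node (pre ++ ts)).rightSpan v - v.length + 1 - ts.length := by
  induction ts generalizing pre j with
  | nil => simp [positionsList] at hv
  | cons c ts ih =>
    have hc : (pre ++ c :: ts)[pre.length]? = some c := by simp
    rw [positionsList_cons] at hv ⊢
    rw [List.take_append, lukaSum_append]
    by_cases hj : j < c.positions.length
    · rw [List.getElem?_append_left (by simpa), List.getElem?_map] at hv
      obtain ⟨p, hp, rfl⟩ := Option.map_eq_some_iff.mp hv
      rw [← List.map_take, lukaSum_map_cons hc, h c List.mem_cons_self j p hp,
        List.length_map, Nat.sub_eq_zero_of_le hj.le, List.take_zero, lukaSum_nil,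
        rightSpan_cons hc]
      simp only [List.length_append, List.length_cons]
      push_cast
      omega
    · push Not at hj
      rw [List.getElem?_append_right (by simpa), List.length_map] at hv
      have hv' : (positionsList (pre ++ [c]).length ts)[j - c.positions.length]? = some v := by
        simpa using hv
      have ih := ih (pre ++ [c]) (fun c' hc' => h c' (List.mem_cons_of_mem _ hc')) hv'
      rw [List.append_assoc, List.singleton_append, List.length_append, List.length_singleton]
        at ih
      rw [List.take_of_length_le (by simpa), List.length_map, lukaSum_map_cons hc,
        lukaSum_positions, ih, List.length_cons]
      push_cast
      ring

theorem lukaSum_take_positions : ∀ (t : PlaneTree) (j : ℕ) (v : List ℕ),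
    t.positions[j]? = some v → t.lukaSum (t.positions.take j) = t.rightSpan v - v.length :=
  node_induction fun ts ih j v hv => by
    rw [positions] at hv ⊢
    cases j with
    | zero => obtain rfl : [] = v := Option.some.inj hv; simp
    | succ j =>
      rw [List.getElem?_cons_succ] at hv
      have h := lukaSum_positionsList_take [] ts ih hv
      rw [List.nil_append, List.length_nil] at h
      rw [List.take_succ_cons, lukaSum_cons, h]
      simp only [out, subtree?_nil, children]
      ring

theorem luka_eq_rightSpan_sub_length {t : PlaneTree} {j : ℕ} {v : List ℕ}
    (hv : t.positions[j]? = some v) : t.luka j = t.rightSpan v - v.length := by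
  rw [luka_eq_lukaSum_take, lukaSum_take_positions t j v hv]

end PlaneTree

open PlaneTree in
/-- For a finite plane tree `τ` with vertices `u_0, ..., u_{n-1}` in DFS order, the
looptree distance from the root to `u_j` is at most `d_τ(root, u_j) + W_j(τ)`, where
`W(τ)` is the Lukasiewicz path; consequently
`height(Loop(τ)) ≤ height(τ) + max_{0 ≤ j ≤ n} W_j(τ)`. -/
theorem stmt1 (t : PlaneTree) :
    (∀ (j : ℕ) (v : List ℕ), t.positions[j]? = some v →
      (t.loopDist v : ℤ) ≤ (v.length : ℤ) + t.luka j) ∧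
    (t.loopHeight : ℤ) ≤ (t.height : ℤ) +
      (Finset.range (t.positions.length + 1)).sup' Finset.nonempty_range_add_one t.luka := by
  have hdist : ∀ (j : ℕ) (v : List ℕ), t.positions[j]? = some v →
      (t.loopDist v : ℤ) ≤ (v.length : ℤ) + t.luka j := fun j v hv => by
    have := loopDist_le_rightSpan (List.mem_of_getElem? hv)
    rw [luka_eq_rightSpan_sub_length hv]
    omega
  refine ⟨hdist, ?_⟩
  set S := (Finset.range (t.positions.length + 1)).sup' Finset.nonempty_range_add_one t.luka
  have hS : 0 ≤ S := Finset.le_sup' t.luka (Finset.mem_range.mpr (Nat.succ_pos _))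
  have hbound : ∀ x ∈ t.positions.map t.loopDist, x ≤ ((t.height : ℤ) + S).toNat := by
    simp only [List.mem_map, forall_exists_index, and_imp, forall_apply_eq_imp_iff₂]
    intro v hv
    obtain ⟨j, hj⟩ := List.getElem?_of_mem hv
    have hjS : t.luka j ≤ S := Finset.le_sup' t.luka <|
      Finset.mem_range.mpr (Nat.lt_succ_of_lt (List.getElem?_eq_some_iff.mp hj).1)
    have hvh : v.length ≤ t.height := List.le_max_of_le' 0 (List.mem_map_of_mem hv) le_rfl
    have := hdist j v hj
    omega
  have : t.loopHeight ≤ ((t.height : ℤ) + S).toNat := List.max_le_of_forall_le _ _ hbound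
  omega
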